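/- arXiv:1405.3443 — 2 statements merged into one kernel-verified Lean document; each statement's English description precedes it below -/
import Mathlib

section
/- Let ν > 0 and let μ be a Borel probability measure on ℝ with ∫_ℝ e^{νz} μ(dz) = 1, and set μ^ν(dz) = e^{νz} μ(dz) (again a probability measure). Then for all Borel sets C, D ⊆ ℝ one has ∫_C μ({w : x + w ∈ D}) e^{−νx} dx = ∫_D μ^ν({w : y − w ∈ C}) e^{−νy} dy, both sides valued in [0,∞]. Probabilistically: if X has law μ and X^ν has law μ^ν, then ∫_C P(x + X ∈ D) e^{−νx} dx = ∫_D P(y − X^ν ∈ C) e^{−νy} dy, i.e. −X^ν is the time reversal of X with respect to the invariant measure π(dx) = e^{−νx} dx. -/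
open MeasureTheory ENNReal

/-- A Lévy process on the real line seen from its supremum (Engelke–Ivanovs):
time reversal of `X` with respect to the invariant measure `π(dx) = e^{-νx} dx`.
If `μ` is a probability law with `∫ e^{νz} μ(dz) = 1` and `μ^ν(dz) = e^{νz} μ(dz)`,
then for all Borel `C, D ⊆ ℝ`,
`∫_C μ{w : x + w ∈ D} e^{-νx} dx = ∫_D μ^ν{w : y - w ∈ C} e^{-νy} dy`. -/
theorem time_reversal_invariant_measure
    (ν : ℝ) (hν : 0 < ν)
    (μ : Measure ℝ) [IsProbabilityMeasure μ]
    (hμ : ∫⁻ z, ENNReal.ofReal (Real.exp (ν * z)) ∂μ = 1)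
    (C D : Set ℝ) (hC : MeasurableSet C) (hD : MeasurableSet D) :
    ∫⁻ x in C, μ {w | x + w ∈ D} * ENNReal.ofReal (Real.exp (-(ν * x))) =
      ∫⁻ y in D,
        (μ.withDensity fun z => ENNReal.ofReal (Real.exp (ν * z))) {w | y - w ∈ C} *
          ENNReal.ofReal (Real.exp (-(ν * y))) := by
  have hmC : Measurable (C.indicator (1 : ℝ → ℝ≥0∞)) := measurable_one.indicator hC
  have hmD : Measurable (D.indicator (1 : ℝ → ℝ≥0∞)) := measurable_one.indicator hD
  have hE : Measurable fun x : ℝ => ENNReal.ofReal (Real.exp (-(ν * x))) := by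
    fun_prop
  have hEp : Measurable fun x : ℝ => ENNReal.ofReal (Real.exp (ν * x)) := by
    fun_prop
  set E : ℝ → ℝ≥0∞ := fun x => ENNReal.ofReal (Real.exp (-(ν * x))) with hEdef
  -- the common double integral
  set G : ℝ → ℝ → ℝ≥0∞ := fun y w =>
    D.indicator 1 y * (C.indicator 1 (y - w) * ENNReal.ofReal (Real.exp (ν * w)) * E y)
    with hGdef
  have hGm : Measurable (Function.uncurry G) := by
    apply Measurable.mul
    · exact hmD.comp measurable_fst
    · exact ((hmC.comp (measurable_fst.sub measurable_snd)).mul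
        (hEp.comp measurable_snd)).mul (hE.comp measurable_fst)
  -- RHS = ∫⁻ y, ∫⁻ w, G y w ∂μ
  have hRHS : (∫⁻ y in D,
        (μ.withDensity fun z => ENNReal.ofReal (Real.exp (ν * z))) {w | y - w ∈ C} * E y)
      = ∫⁻ y, ∫⁻ w, G y w ∂μ := by
    rw [← lintegral_indicator hD]
    refine lintegral_congr fun y => ?_
    have hSy : MeasurableSet {w : ℝ | y - w ∈ C} := hC.preimage (by fun_prop)
    have h1 : (μ.withDensity fun z => ENNReal.ofReal (Real.exp (ν * z))) {w | y - w ∈ C}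
        = ∫⁻ w, C.indicator 1 (y - w) * ENNReal.ofReal (Real.exp (ν * w)) ∂μ := by
      rw [withDensity_apply _ hSy, ← lintegral_indicator hSy]
      refine lintegral_congr fun w => ?_
      by_cases h : y - w ∈ C <;> simp [Set.indicator_apply, h]
    by_cases hy : y ∈ D
    · simp only [Set.indicator_of_mem hy, hGdef, Set.indicator_of_mem hy, Pi.one_apply,
        one_mul, h1]
      have hf : Measurable fun w : ℝ =>
          C.indicator 1 (y - w) * ENNReal.ofReal (Real.exp (ν * w)) :=
        (hmC.comp (measurable_const.sub measurable_id)).mul hEp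
      exact (lintegral_mul_const (E y) hf).symm
    · simp [Set.indicator_of_notMem hy, hGdef]
  -- LHS = ∫⁻ x, ∫⁻ w, F x w ∂μ where F x w = 1_C(x) 1_D(x+w) E x
  set F : ℝ → ℝ → ℝ≥0∞ := fun x w =>
    C.indicator 1 x * (D.indicator 1 (x + w) * E x) with hFdef
  have hFm : Measurable (Function.uncurry F) := by
    apply Measurable.mul
    · exact hmC.comp measurable_fst
    · exact (hmD.comp (measurable_fst.add measurable_snd)).mul (hE.comp measurable_fst)
  have hLHS : (∫⁻ x in C, μ {w | x + w ∈ D} * E x) = ∫⁻ x, ∫⁻ w, F x w ∂μ := by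
    rw [← lintegral_indicator hC]
    refine lintegral_congr fun x => ?_
    have hSx : MeasurableSet {w : ℝ | x + w ∈ D} := hD.preimage (by fun_prop)
    have h1 : μ {w | x + w ∈ D} = ∫⁻ w, D.indicator 1 (x + w) ∂μ := by
      rw [← lintegral_indicator_one hSx]
      refine lintegral_congr fun w => ?_
      by_cases h : x + w ∈ D <;> simp [Set.indicator_apply, h]
    by_cases hx : x ∈ C
    · simp only [Set.indicator_of_mem hx, hFdef, Pi.one_apply, one_mul, h1]
      have hf : Measurable fun w : ℝ => D.indicator 1 (x + w) :=
        hmD.comp (measurable_const.add measurable_id)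
      exact (lintegral_mul_const (E x) hf).symm
    · simp [Set.indicator_of_notMem hx, hFdef]
  rw [hLHS, hRHS]
  -- swap, substitute, swap back
  rw [lintegral_lintegral_swap hFm.aemeasurable, lintegral_lintegral_swap hGm.aemeasurable]
  refine lintegral_congr fun w => ?_
  have key : ∫⁻ x, F x w = ∫⁻ y, F (y - w) w := by
    exact ((measurePreserving_sub_right volume w).lintegral_comp
      (f := fun x => F x w) (hFm.comp (measurable_id.prodMk measurable_const))).symm
  rw [key]
  refine lintegral_congr fun y => ?_
  simp only [hFdef, hGdef, hEdef, sub_add_cancel]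
  have : Real.exp (-(ν * (y - w))) = Real.exp (ν * w) * Real.exp (-(ν * y)) := by
    rw [← Real.exp_add]; ring_nf
  rw [this, ENNReal.ofReal_mul (Real.exp_pos _).le]
  ring
end

section
/- Let ν ∈ ℝ and let Π be a Borel measure on ℝ with Π({0}) = 0, ∫_{(−1,1)} |x| Π(dx) < ∞ and Π((−1, 0)) > 0, and set Π^ν(dx) = e^{νx} Π(dx). For x ∈ (0,1) define I(x) = ∫₀ˣ Π((−1, −y)) dy and I^ν(x) = ∫₀ˣ Π^ν((−1, −y)) dy; then I(x) and I^ν(x) are finite and strictly positive for every x ∈ (0,1), and ∫_{(0,1)} (x / I(x)) Π(dx) < ∞ if and only if ∫_{(0,1)} (x / I^ν(x)) Π^ν(dx) < ∞. -/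
/-!
On `(-1, 1)` the density `e^{νz}` lies between `e^{-|ν|}` and `e^{|ν|}`, so there `Λ` and its tilt
`Λ^ν` are each at most `e^{|ν|}` times the other (one bound gives the other, since `Λ` is the
`(-ν)`-tilt of `Λ^ν`). The integral tests only see the measure on `(-1, 1)` and are monotone in
it, so tilting changes them by at most a constant factor. Finiteness of `I` is the layer-cake
formula, `I(x) ≤ ∫_{(-1,0)} |z| Λ(dz)`; positivity holds because `Λ((-1,-s)) > 0` for some small
`s > 0`.
-/

open MeasureTheory Set
open scoped ENNReal

noncomputable def expTilt (ν : ℝ) (Λ : Measure ℝ) : Measure ℝ :=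
  Λ.withDensity fun z => ENNReal.ofReal (Real.exp (ν * z))

lemma measurable_ofReal_exp_mul (ν : ℝ) :
    Measurable fun z : ℝ => ENNReal.ofReal (Real.exp (ν * z)) := by
  fun_prop

lemma expTilt_neg_expTilt (ν : ℝ) (Λ : Measure ℝ) : expTilt (-ν) (expTilt ν Λ) = Λ := by
  rw [expTilt, expTilt, ← withDensity_mul _ (measurable_ofReal_exp_mul ν)
    (measurable_ofReal_exp_mul (-ν))]
  convert withDensity_one (μ := Λ)
  funext z
  rw [Pi.mul_apply, ← ENNReal.ofReal_mul (Real.exp_pos _).le, ← Real.exp_add]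
  simp

lemma restrict_withDensity_le_smul {α : Type*} [MeasurableSpace α] {μ : Measure α}
    {f : α → ℝ≥0∞} {s : Set α} (hs : MeasurableSet s) {C : ℝ≥0∞} (hf : ∀ z ∈ s, f z ≤ C) :
    (μ.withDensity f).restrict s ≤ C • μ.restrict s := by
  rw [restrict_withDensity hs, ← withDensity_const]
  exact withDensity_mono ((ae_restrict_mem hs).mono hf)

lemma restrict_expTilt_le (ν : ℝ) (Λ : Measure ℝ) :
    (expTilt ν Λ).restrict (Ioo (-1) 1) ≤
      ENNReal.ofReal (Real.exp |ν|) • Λ.restrict (Ioo (-1) 1) := by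
  refine restrict_withDensity_le_smul measurableSet_Ioo fun z hz => ?_
  refine ENNReal.ofReal_le_ofReal (Real.exp_le_exp.2 ?_)
  calc ν * z ≤ |ν| * |z| := by rw [← abs_mul]; exact le_abs_self _
    _ ≤ |ν| * 1 := by gcongr; exact abs_le.2 ⟨hz.1.le, hz.2.le⟩
    _ = |ν| := mul_one _

lemma restrict_le_expTilt (ν : ℝ) (Λ : Measure ℝ) :
    Λ.restrict (Ioo (-1) 1) ≤
      ENNReal.ofReal (Real.exp |ν|) • (expTilt ν Λ).restrict (Ioo (-1) 1) := by
  simpa [expTilt_neg_expTilt] using restrict_expTilt_le (-ν) (expTilt ν Λ)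

/-- With `ρ = volume` this is `I(x) = ∫₀ˣ μ((-1,-y)) dy`. -/
noncomputable def negTailIntegral (μ ρ : Measure ℝ) (x : ℝ) : ℝ≥0∞ :=
  ∫⁻ y in Ioo 0 x, μ (Ioo (-1) (-y)) ∂ρ

lemma negTailIntegral_restrict (μ ρ : Measure ℝ) {x : ℝ} (hx : x ≤ 1) :
    negTailIntegral (μ.restrict (Ioo (-1) 1)) (ρ.restrict (Ioo (-1) 1)) x =
      negTailIntegral μ ρ x := by
  rw [negTailIntegral, negTailIntegral,
    Measure.restrict_restrict_of_subset (Ioo_subset_Ioo (by norm_num) hx)]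
  refine setLIntegral_congr_fun measurableSet_Ioo fun y hy => ?_
  rw [Measure.restrict_apply measurableSet_Ioo,
    inter_eq_left.2 (Ioo_subset_Ioo le_rfl (by linarith [hy.1]))]

lemma negTailIntegral_le_mul {μ μ' ρ ρ' : Measure ℝ} {C D : ℝ≥0∞} (hμ : μ ≤ C • μ')
    (hρ : ρ ≤ D • ρ') (hC : C ≠ ⊤) (x : ℝ) :
    negTailIntegral μ ρ x ≤ C * D * negTailIntegral μ' ρ' x := by
  calc negTailIntegral μ ρ x ≤ ∫⁻ y in Ioo 0 x, C * μ' (Ioo (-1) (-y)) ∂ρ :=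
        lintegral_mono fun y => hμ _
    _ ≤ ∫⁻ y in Ioo 0 x, C * μ' (Ioo (-1) (-y)) ∂(D • ρ') :=
        lintegral_mono' (Measure.restrict_mono le_rfl hρ) le_rfl
    _ = C * D * negTailIntegral μ' ρ' x := by
        rw [Measure.restrict_smul, lintegral_smul_measure, lintegral_const_mul' _ _ hC,
          negTailIntegral, smul_eq_mul]
        ring

lemma lintegral_div_negTailIntegral_le {μ μ' : Measure ℝ} {C : ℝ≥0∞} (hC₀ : C ≠ 0)
    (hC : C ≠ ⊤) (h : μ.restrict (Ioo (-1) 1) ≤ C • μ'.restrict (Ioo (-1) 1)) :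
    ∫⁻ x in Ioo 0 1, ENNReal.ofReal x / negTailIntegral μ' μ' x ≤
      C * C * ∫⁻ x in Ioo 0 1, ENNReal.ofReal x / negTailIntegral μ μ x := by
  have hCC : C * C ≠ ⊤ := ENNReal.mul_ne_top hC hC
  rw [← lintegral_const_mul' _ _ hCC]
  refine setLIntegral_mono' measurableSet_Ioo fun x hx => ?_
  have hJ : negTailIntegral μ μ x ≤ C * C * negTailIntegral μ' μ' x := by
    rw [← negTailIntegral_restrict μ μ hx.2.le, ← negTailIntegral_restrict μ' μ' hx.2.le]
    exact negTailIntegral_le_mul h h hC x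
  calc ENNReal.ofReal x / negTailIntegral μ' μ' x
      = C * C * ENNReal.ofReal x / (C * C * negTailIntegral μ' μ' x) :=
        (ENNReal.mul_div_mul_left _ _ (mul_ne_zero hC₀ hC₀) hCC).symm
    _ ≤ C * C * ENNReal.ofReal x / negTailIntegral μ μ x := ENNReal.div_le_div_left hJ _
    _ = C * C * (ENNReal.ofReal x / negTailIntegral μ μ x) := mul_div_assoc _ _ _

lemma negTailIntegral_volume_le (μ : Measure ℝ) (x : ℝ) :
    negTailIntegral μ volume x ≤ ∫⁻ z in Ioo (-1) 0, ENNReal.ofReal (-z) ∂μ := by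
  have hnn : 0 ≤ᵐ[μ.restrict (Ioo (-1) 0)] fun z => -z := by
    filter_upwards [ae_restrict_mem measurableSet_Ioo] with z hz
    exact neg_nonneg.2 hz.2.le
  rw [lintegral_eq_lintegral_meas_lt _ hnn measurable_neg.aemeasurable]
  refine (lintegral_mono_set Ioo_subset_Ioi_self).trans_eq
    (setLIntegral_congr_fun measurableSet_Ioi fun y hy => ?_)
  rw [Measure.restrict_apply' measurableSet_Ioo]
  congr 1
  ext z
  simp only [mem_Ioo, mem_inter_iff, mem_ofPred_eq]
  constructor
  · rintro ⟨h1, h2⟩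
    exact ⟨by linarith, h1, by linarith [mem_Ioi.1 hy]⟩
  · rintro ⟨h1, h2, -⟩
    exact ⟨h2, by linarith⟩

lemma negTailIntegral_volume_lt_top {μ : Measure ℝ}
    (hμ : ∫⁻ z in Ioo (-1) 1, ENNReal.ofReal |z| ∂μ < ⊤) (x : ℝ) :
    negTailIntegral μ volume x < ⊤ :=
  calc negTailIntegral μ volume x ≤ ∫⁻ z in Ioo (-1) 0, ENNReal.ofReal (-z) ∂μ :=
        negTailIntegral_volume_le μ x
    _ ≤ ∫⁻ z in Ioo (-1) 1, ENNReal.ofReal |z| ∂μ :=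
        (lintegral_mono fun z => ENNReal.ofReal_le_ofReal (neg_le_abs z)).trans
          (lintegral_mono_set (Ioo_subset_Ioo le_rfl zero_le_one))
    _ < ⊤ := hμ

lemma exists_measure_Ioo_neg_pos {μ : Measure ℝ} (hμ : 0 < μ (Ioo (-1) 0)) {x : ℝ}
    (hx : 0 < x) : ∃ s ∈ Ioo 0 x, 0 < μ (Ioo (-1) (-s)) := by
  by_contra! h
  have hcover : Ioo (-1 : ℝ) 0 ⊆ ⋃ n : ℕ, Ioo (-1) (-(x / (n + 2))) := by
    intro z hz
    obtain ⟨n, hn⟩ := exists_nat_gt (x / -z)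
    refine mem_iUnion.2 ⟨n, hz.1, ?_⟩
    have hz0 : 0 < -z := neg_pos.2 hz.2
    rw [div_lt_iff₀ hz0] at hn
    rw [lt_neg, div_lt_iff₀ (by positivity)]
    nlinarith
  have hnull : ∀ n : ℕ, μ (Ioo (-1) (-(x / (n + 2)))) = 0 := fun n =>
    nonpos_iff_eq_zero.1 (h _ ⟨by positivity, div_lt_self hx (by linarith)⟩)
  exact hμ.ne' (measure_mono_null hcover (measure_iUnion_null hnull))

lemma negTailIntegral_volume_pos {μ : Measure ℝ} (hμ : 0 < μ (Ioo (-1) 0)) {x : ℝ}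
    (hx : 0 < x) : 0 < negTailIntegral μ volume x := by
  obtain ⟨s, ⟨hs₀, hsx⟩, hμs⟩ := exists_measure_Ioo_neg_pos hμ hx
  calc 0 < μ (Ioo (-1) (-s)) * ENNReal.ofReal s :=
        ENNReal.mul_pos hμs.ne' (ENNReal.ofReal_pos.2 hs₀).ne'
    _ = ∫⁻ _ in Ioo 0 s, μ (Ioo (-1) (-s)) := by
        rw [setLIntegral_const, Real.volume_Ioo, sub_zero]
    _ ≤ ∫⁻ y in Ioo 0 s, μ (Ioo (-1) (-y)) :=
        setLIntegral_mono' measurableSet_Ioo fun y hy =>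
          measure_mono (Ioo_subset_Ioo le_rfl (neg_le_neg hy.2.le))
    _ ≤ negTailIntegral μ volume x := lintegral_mono_set (Ioo_subset_Ioo le_rfl hsx.le)

theorem regularity_integral_test_tilting_general
    (Λ : Measure ℝ)
    (hΛ : ∫⁻ x in Set.Ioo (-1 : ℝ) 1, ENNReal.ofReal |x| ∂Λ < ⊤)
    (hneg : 0 < Λ (Set.Ioo (-1 : ℝ) 0))
    (ν : ℝ) :
    (∀ x ∈ Set.Ioo (0 : ℝ) 1,
      (∫⁻ y in Set.Ioo (0 : ℝ) x, Λ (Set.Ioo (-1 : ℝ) (-y))) ∈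
          Set.Ioo (0 : ENNReal) ⊤ ∧
      (∫⁻ y in Set.Ioo (0 : ℝ) x,
          (Λ.withDensity fun z => ENNReal.ofReal (Real.exp (ν * z)))
            (Set.Ioo (-1 : ℝ) (-y))) ∈ Set.Ioo (0 : ENNReal) ⊤) ∧
    ((∫⁻ x in Set.Ioo (0 : ℝ) 1,
        ENNReal.ofReal x / ∫⁻ y in Set.Ioo (0 : ℝ) x, Λ (Set.Ioo (-1 : ℝ) (-y)) ∂Λ) < ⊤ ↔
      (∫⁻ x in Set.Ioo (0 : ℝ) 1,
        ENNReal.ofReal x / ∫⁻ y in Set.Ioo (0 : ℝ) x,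
            (Λ.withDensity fun z => ENNReal.ofReal (Real.exp (ν * z)))
              (Set.Ioo (-1 : ℝ) (-y))
          ∂(Λ.withDensity fun z => ENNReal.ofReal (Real.exp (ν * z)))) < ⊤) := by
  set C := ENNReal.ofReal (Real.exp |ν|)
  have hC₀ : C ≠ 0 := (ENNReal.ofReal_pos.2 (Real.exp_pos _)).ne'
  have hCC : C * C < ⊤ := ENNReal.mul_lt_top ENNReal.ofReal_lt_top ENNReal.ofReal_lt_top
  have hΛν : ∫⁻ z in Ioo (-1) 1, ENNReal.ofReal |z| ∂(expTilt ν Λ) < ⊤ :=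
    calc ∫⁻ z in Ioo (-1) 1, ENNReal.ofReal |z| ∂(expTilt ν Λ)
        ≤ C * ∫⁻ z in Ioo (-1) 1, ENNReal.ofReal |z| ∂Λ :=
          (lintegral_mono' (restrict_expTilt_le ν Λ) le_rfl).trans_eq
            (lintegral_smul_measure _ _)
      _ < ⊤ := ENNReal.mul_lt_top ENNReal.ofReal_lt_top hΛ
  have hnegν : 0 < expTilt ν Λ (Ioo (-1) 0) := by
    have h := restrict_le_expTilt ν Λ (Ioo (-1) 0)
    rw [Measure.smul_apply, smul_eq_mul, Measure.restrict_apply measurableSet_Ioo,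
      Measure.restrict_apply measurableSet_Ioo,
      inter_eq_left.2 (Ioo_subset_Ioo le_rfl zero_le_one)] at h
    exact pos_of_ne_zero fun h0 => hneg.ne' (by simpa [h0] using h)
  refine ⟨fun x hx => ⟨⟨negTailIntegral_volume_pos hneg hx.1, negTailIntegral_volume_lt_top hΛ x⟩,
    ⟨negTailIntegral_volume_pos hnegν hx.1, negTailIntegral_volume_lt_top hΛν x⟩⟩,
    fun h => ?_, fun h => ?_⟩
  · exact (lintegral_div_negTailIntegral_le hC₀ ENNReal.ofReal_ne_top
      (restrict_le_expTilt ν Λ)).trans_lt (ENNReal.mul_lt_top hCC h)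
  · exact (lintegral_div_negTailIntegral_le hC₀ ENNReal.ofReal_ne_top
      (restrict_expTilt_le ν Λ)).trans_lt (ENNReal.mul_lt_top hCC h)

/-- Irregularity upwards is preserved by exponential tilting: with
`I(x) = ∫₀ˣ Λ((-1,-y)) dy` and `I^ν(x) = ∫₀ˣ Λ^ν((-1,-y)) dy` (where
`Λ^ν(dx) = e^{νx} Λ(dx)`), both are finite and strictly positive for
`x ∈ (0,1)`, and `∫_{(0,1)} x/I(x) Λ(dx) < ∞` iff
`∫_{(0,1)} x/I^ν(x) Λ^ν(dx) < ∞`. -/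
theorem regularity_integral_test_tilting
    (Λ : Measure ℝ) (hΛ0 : Λ {0} = 0)
    (hΛ : ∫⁻ x in Set.Ioo (-1 : ℝ) 1, ENNReal.ofReal |x| ∂Λ < ⊤)
    (hneg : 0 < Λ (Set.Ioo (-1 : ℝ) 0))
    (ν : ℝ) :
    (∀ x ∈ Set.Ioo (0 : ℝ) 1,
      (∫⁻ y in Set.Ioo (0 : ℝ) x, Λ (Set.Ioo (-1 : ℝ) (-y))) ∈
          Set.Ioo (0 : ENNReal) ⊤ ∧
      (∫⁻ y in Set.Ioo (0 : ℝ) x,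
          (Λ.withDensity fun z => ENNReal.ofReal (Real.exp (ν * z)))
            (Set.Ioo (-1 : ℝ) (-y))) ∈ Set.Ioo (0 : ENNReal) ⊤) ∧
    ((∫⁻ x in Set.Ioo (0 : ℝ) 1,
        ENNReal.ofReal x / ∫⁻ y in Set.Ioo (0 : ℝ) x, Λ (Set.Ioo (-1 : ℝ) (-y)) ∂Λ) < ⊤ ↔
      (∫⁻ x in Set.Ioo (0 : ℝ) 1,
        ENNReal.ofReal x / ∫⁻ y in Set.Ioo (0 : ℝ) x,
            (Λ.withDensity fun z => ENNReal.ofReal (Real.exp (ν * z)))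
              (Set.Ioo (-1 : ℝ) (-y))
          ∂(Λ.withDensity fun z => ENNReal.ofReal (Real.exp (ν * z)))) < ⊤) :=
  regularity_integral_test_tilting_general Λ hΛ hneg ν
end
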